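/- arXiv:2504.14510 — 5 statements merged into one kernel-verified Lean document; each statement's English description precedes it below -/
import Mathlib

section
/- Let G=(V,E) be a finite connected weighted graph with symmetric positive edge weights and measure μ. Then there exists a constant C > 0 depending only on the graph such that for every function u : V → ℝ, max_V u − min_V u ≤ C ‖Δu‖_∞. Explicitly one may take C = √((ℓ−1)|V| / (w₀ λ₁)), where ℓ is the number of vertices, |V| = Σ_x μ(x), w₀ = min of the edge weights, and λ₁ = inf{ ∫_V |∇v|² dμ : ∫_V v dμ = 0, ∫_V v² dμ = 1 } is the first nonzero eigenvalue of the Laplacian. -/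
open Real Finset Filter Topology

variable {V : Type*}

/-- Graph Laplacian: Δu(x) = (1/μ x) Σ_y ω_{xy}(u(y) − u(x)); non-edges have weight 0. -/
noncomputable def glap [Fintype V] (μ : V → ℝ) (w : V → V → ℝ) (u : V → ℝ) (x : V) : ℝ :=
  (1 / μ x) * ∑ y, w x y * (u y - u x)

/-- Integral over the graph: ∫_V g dμ = Σ_x μ(x) g(x). -/
noncomputable def intg [Fintype V] (μ : V → ℝ) (g : V → ℝ) : ℝ := ∑ x, μ x * g x

/-- Dirichlet energy ∫_V |∇u|² dμ = (1/2) Σ_x Σ_y ω_{xy}(u(y) − u(x))². -/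
noncomputable def gradSq [Fintype V] (w : V → V → ℝ) (u : V → ℝ) : ℝ :=
  (1/2) * ∑ x, ∑ y, w x y * (u y - u x)^2

/-- Connectivity: any two vertices are joined by a finite chain of positive-weight edges. -/
def GConn (w : V → V → ℝ) : Prop :=
  ∀ x y : V, Relation.ReflTransGen (fun a b => 0 < w a b) x y

/-- Sup norm ‖u‖_∞. -/
noncomputable def supnorm [Fintype V] (u : V → ℝ) : ℝ := ⨆ x, |u x|

/-!
Fix a level `r` with `min u ≤ r < max u` and let `S = {u > r}`. By symmetry of the weights,
`∑_{x ∈ S} μ(x) Δu(x)` is the flux `∑_{x ∈ S, y ∉ S} w_{xy} (u(y) - u(x))`, a sum of nonpositive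
terms, and it is at least `-|V| ‖Δu‖_∞`. Connectivity gives an edge `pq` leaving `S`, so
`w₀ (u(p) - u(q)) ≤ |V| ‖Δu‖_∞` with `w₀` the least positive weight: above every value of `u`
below its maximum there is another value within `δ = |V| ‖Δu‖_∞ / w₀`. Climbing from `min u` to
`max u` in such steps takes at most `ℓ = #V` of them, whence `C = ℓ |V| / w₀`.
-/

theorem Relation.ReflTransGen.exists_rel_of_not {α : Type*} {r : α → α → Prop} {P : α → Prop}
    {x y : α} (h : Relation.ReflTransGen r x y) (hx : P x) (hy : ¬ P y) :
    ∃ a b, r a b ∧ P a ∧ ¬ P b := by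
  induction h with
  | refl => exact absurd hx hy
  | @tail b c _ hbc ih =>
    by_cases hb : P b
    · exact ⟨b, c, hbc, hb, hy⟩
    · exact ih hb

theorem exists_pos_le_of_pos {ι : Type*} [Finite ι] (f : ι → ℝ) :
    ∃ c > 0, ∀ i, 0 < f i → c ≤ f i := by
  by_cases h : ∃ i, 0 < f i
  · have : Nonempty {i // 0 < f i} := let ⟨i, hi⟩ := h; ⟨⟨i, hi⟩⟩
    obtain ⟨⟨j, hj⟩, hmin⟩ := Finite.exists_min (fun i : {i // 0 < f i} => f i)
    exact ⟨f j, hj, fun i hi => hmin ⟨i, hi⟩⟩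
  · exact ⟨1, one_pos, fun i hi => (h ⟨i, hi⟩).elim⟩

theorem sub_le_card_filter_lt_mul_of_gap_le {ι : Type*} [Fintype ι] {f : ι → ℝ} {δ : ℝ}
    (hδ : 0 ≤ δ) {i j : ι} (hgap : ∀ k, f k < f j → ∃ l, f k < f l ∧ f l ≤ f k + δ) :
    f j - f i ≤ #{k | f i < f k} * δ := by
  classical
  rcases le_or_gt (f j) (f i) with hji | hij
  · have : 0 ≤ (#{k | f i < f k} : ℝ) * δ := by positivity
    linarith
  obtain ⟨l, hil, hlδ⟩ := hgap i hij
  have hcard : #{k | f l < f k} < #{k | f i < f k} := by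
    refine card_lt_card ⟨fun k hk => ?_, fun hsub => ?_⟩
    · simp only [mem_filter, mem_univ, true_and] at hk ⊢
      linarith
    exact lt_irrefl (f l) (mem_filter.mp (hsub (mem_filter.mpr ⟨mem_univ l, hil⟩))).2
  have ih := sub_le_card_filter_lt_mul_of_gap_le hδ (i := l) hgap
  have : (#{k | f l < f k} : ℝ) + 1 ≤ #{k | f i < f k} := by exact_mod_cast hcard
  nlinarith
termination_by #{k | f i < f k}

theorem sum_sum_mul_sub_eq_zero {w : V → V → ℝ} (hsymm : ∀ x y, w x y = w y x) (u : V → ℝ)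
    (S : Finset V) :
    ∑ x ∈ S, ∑ y ∈ S, w x y * (u y - u x) = 0 := by
  have hswap : ∑ x ∈ S, ∑ y ∈ S, w x y * (u y - u x) = ∑ x ∈ S, ∑ y ∈ S, w y x * (u x - u y) :=
    sum_comm
  have hneg : ∑ x ∈ S, ∑ y ∈ S, w y x * (u x - u y) = -∑ x ∈ S, ∑ y ∈ S, w x y * (u y - u x) := by
    simp only [← sum_neg_distrib, hsymm _ _]
    exact sum_congr rfl fun _ _ => sum_congr rfl fun _ _ => by ring
  linarith

section WeightedGraph

variable [Fintype V] {μ : V → ℝ} {w : V → V → ℝ}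

theorem supnorm_nonneg (u : V → ℝ) : 0 ≤ supnorm u :=
  Real.iSup_nonneg fun x => abs_nonneg (u x)

theorem abs_le_supnorm (u : V → ℝ) (x : V) : |u x| ≤ supnorm u :=
  le_ciSup (f := fun x => |u x|) (Set.finite_range _).bddAbove x

theorem neg_sum_mul_supnorm_le_sum_mul (hμ : ∀ x, 0 ≤ μ x) (f : V → ℝ) (S : Finset V) :
    -((∑ x, μ x) * supnorm f) ≤ ∑ x ∈ S, μ x * f x := by
  have hS : ∑ x ∈ S, μ x ≤ ∑ x, μ x := sum_le_univ_sum_of_nonneg hμ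
  calc -((∑ x, μ x) * supnorm f) ≤ ∑ x ∈ S, μ x * -supnorm f := by
        rw [← sum_mul]; nlinarith [supnorm_nonneg f]
    _ ≤ ∑ x ∈ S, μ x * f x := sum_le_sum fun x _ =>
        mul_le_mul_of_nonneg_left (neg_le_of_abs_le (abs_le_supnorm f x)) (hμ x)

theorem sum_mul_glap_eq_sum_sum_compl [DecidableEq V] (hμ : ∀ x, μ x ≠ 0)
    (hsymm : ∀ x y, w x y = w y x) (u : V → ℝ) (S : Finset V) :
    ∑ x ∈ S, μ x * glap μ w u x = ∑ x ∈ S, ∑ y ∈ Sᶜ, w x y * (u y - u x) := by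
  have hμglap : ∀ x, μ x * glap μ w u x = ∑ y, w x y * (u y - u x) := fun x => by
    rw [glap, ← mul_assoc, mul_one_div_cancel (hμ x), one_mul]
  simp only [hμglap, ← sum_add_sum_compl S, sum_add_distrib, sum_sum_mul_sub_eq_zero hsymm,
    zero_add]

theorem exists_crossing_edge_mul_sub_le (hμ : ∀ x, 0 < μ x) (hsymm : ∀ x y, w x y = w y x)
    (hnn : ∀ x y, 0 ≤ w x y) (hconn : GConn w) {w₀ : ℝ} (hw₀ : ∀ p q, 0 < w p q → w₀ ≤ w p q)
    (u : V → ℝ) {r : ℝ} {x y : V} (hx : r < u x) (hy : u y ≤ r) :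
    ∃ p q, u q ≤ r ∧ r < u p ∧ w₀ * (u p - u q) ≤ (∑ z, μ z) * supnorm (glap μ w u) := by
  classical
  obtain ⟨p, q, hpq, hp, hq⟩ :=
    (hconn x y).exists_rel_of_not (P := fun z => r < u z) hx (not_lt.mpr hy)
  rw [not_lt] at hq
  set S : Finset V := {z | r < u z}
  have hflux : ∑ a ∈ S, ∑ b ∈ Sᶜ, w a b * (u b - u a) ≤ w p q * (u q - u p) := by
    rw [← sum_product', ← sum_singleton (fun z : V × V => w z.1 z.2 * (u z.2 - u z.1)) (p, q)]
    refine sum_le_sum_of_subset_of_nonpos' (by simp [S, hp, hq]) fun ⟨a, b⟩ hab _ => ?_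
    simp only [S, mem_product, mem_compl, mem_filter, mem_univ, true_and, not_lt] at hab
    exact mul_nonpos_of_nonneg_of_nonpos (hnn a b) (by linarith)
  have hgreen := sum_mul_glap_eq_sum_sum_compl (fun z => (hμ z).ne') hsymm u S
  have hlow := neg_sum_mul_supnorm_le_sum_mul (fun z => (hμ z).le) (glap μ w u) S
  refine ⟨p, q, hq, hp, ?_⟩
  calc w₀ * (u p - u q) ≤ w p q * (u p - u q) :=
        mul_le_mul_of_nonneg_right (hw₀ p q hpq) (by linarith)
    _ ≤ (∑ z, μ z) * supnorm (glap μ w u) := by linarith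

end WeightedGraph

/-- Elliptic estimate: max u − min u ≤ C ‖Δu‖_∞ with C depending only on the graph. -/
theorem stmt3 [Fintype V] [Nonempty V] (μ : V → ℝ) (w : V → V → ℝ)
    (hμ : ∀ x, 0 < μ x) (hsymm : ∀ x y, w x y = w y x) (hnn : ∀ x y, 0 ≤ w x y)
    (hconn : GConn w) :
    ∃ C : ℝ, 0 < C ∧ ∀ u : V → ℝ,
      (⨆ x, u x) - (⨅ x, u x) ≤ C * supnorm (glap μ w u) := by
  obtain ⟨w₀, hw₀, hw₀le⟩ := exists_pos_le_of_pos fun p : V × V => w p.1 p.2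
  set M := ∑ x, μ x
  have hM : 0 < M := sum_pos (fun x _ => hμ x) univ_nonempty
  refine ⟨Fintype.card V * M / w₀, by positivity, fun u => ?_⟩
  obtain ⟨a, ha⟩ := exists_eq_ciSup_of_finite (f := u)
  obtain ⟨b, hb⟩ := exists_eq_ciInf_of_finite (f := u)
  set δ := M * supnorm (glap μ w u) / w₀
  have hgap : ∀ x, u x < u a → ∃ y, u x < u y ∧ u y ≤ u x + δ := fun x hx => by
    obtain ⟨p, q, hq, hp, hpq⟩ :=
      exists_crossing_edge_mul_sub_le hμ hsymm hnn hconn (fun p q => hw₀le (p, q)) u hx le_rfl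
    refine ⟨p, hp, ?_⟩
    have : u p - u q ≤ δ := by rw [le_div_iff₀ hw₀]; linarith
    linarith
  have hδ : 0 ≤ δ := div_nonneg (mul_nonneg hM.le (supnorm_nonneg _)) hw₀.le
  rw [← ha, ← hb]
  calc u a - u b ≤ #{k | u b < u k} * δ := sub_le_card_filter_lt_mul_of_gap_le hδ hgap
    _ ≤ Fintype.card V * δ := by gcongr; exact_mod_cast card_filter_le _ _
    _ = Fintype.card V * M / w₀ * supnorm (glap μ w u) := by ring
end

section
/- Let G=(V,E) be a finite connected weighted graph, λ ≠ 0, and f : V → ℝ. If u solves Δu = λe^u(e^u − 1) + f on V, then max_V u ≤ max{0, ln((1 + √(1 + 4a₁/μ₀))/2)}, where a₁ = |V| + |∫_V f dμ|/|λ| and μ₀ = min_{x∈V} μ(x). -/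
open Real Finset Filter Topology

variable {V : Type*}

/-- Uniform upper bound for solutions of the Chern–Simons Higgs equation. -/
theorem stmt8 [Fintype V] [Nonempty V] (μ : V → ℝ) (w : V → V → ℝ)
    (hμ : ∀ x, 0 < μ x) (hsymm : ∀ x y, w x y = w y x) (hnn : ∀ x y, 0 ≤ w x y)
    (hconn : GConn w) (l : ℝ) (hl : l ≠ 0) (f u : V → ℝ)
    (hu : ∀ x, glap μ w u x = l * Real.exp (u x) * (Real.exp (u x) - 1) + f x) :
    (⨆ x, u x) ≤
      max 0 (Real.log ((1 + Real.sqrt (1 + 4 * ((∑ x, μ x) + |intg μ f| / |l|) / (⨅ x, μ x))) / 2)) := by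
  obtain ⟨x₀, hx₀⟩ := Finite.exists_max u
  obtain ⟨z, hz⟩ := Finite.exists_min μ
  set m : ℝ := ⨅ x, μ x with hm
  have hmz : m = μ z := le_antisymm (ciInf_le (Finite.bddBelow_range μ) z) (le_ciInf hz)
  have hm0 : 0 < m := hmz ▸ hμ z
  have hmle : ∀ x, m ≤ μ x := fun x => hmz ▸ hz x
  set C : ℝ := |intg μ f| / |l| with hC
  set Vol : ℝ := ∑ x, μ x with hVol
  have hVol0 : 0 < Vol := Finset.sum_pos (fun x _ => hμ x) Finset.univ_nonempty
  set a₁ : ℝ := Vol + C with ha1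
  have hC0 : 0 ≤ C := div_nonneg (abs_nonneg _) (abs_nonneg _)
  have ha10 : 0 ≤ a₁ := by positivity
  -- main bound at the max point
  suffices hmain : u x₀ ≤ max 0 (Real.log ((1 + Real.sqrt (1 + 4 * a₁ / m)) / 2)) by
    exact ciSup_le fun x => (hx₀ x).trans hmain
  rcases le_or_gt (u x₀) 0 with h0 | h0
  · exact h0.trans (le_max_left _ _)
  -- key integral identity
  have hzero : ∑ x, ∑ y, w x y * (u y - u x) = 0 := by
    simp_rw [mul_sub, Finset.sum_sub_distrib]
    rw [sub_eq_zero, Finset.sum_comm]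
    exact Finset.sum_congr rfl fun x _ => Finset.sum_congr rfl fun y _ => by rw [hsymm]
  have hglap : ∑ x, μ x * glap μ w u x = 0 := by
    rw [← hzero]
    exact Finset.sum_congr rfl fun x _ => by
      unfold glap; field_simp
      exact mul_div_cancel_left₀ _ (hμ x).ne'
  set S : ℝ := ∑ x, μ x * (Real.exp (u x) ^ 2 - Real.exp (u x)) with hSdef
  have hkey : l * S + intg μ f = 0 := by
    have : ∑ x, μ x * (l * Real.exp (u x) * (Real.exp (u x) - 1) + f x) = 0 := by
      rw [← hglap]; exact Finset.sum_congr rfl fun x _ => by rw [hu x]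
    rw [hSdef, intg, Finset.mul_sum, ← Finset.sum_add_distrib, ← this]
    exact Finset.sum_congr rfl fun x _ => by ring
  have hSle : S ≤ C := by
    have hS' : S = -(intg μ f) / l := by field_simp; linarith [hkey]
    have : |S| = C := by rw [hS', hC, abs_div, abs_neg]
    linarith [le_abs_self S, this]
  set t : ℝ := Real.exp (u x₀) with ht
  have ht1 : 1 ≤ t := Real.one_le_exp h0.le
  -- isolate the x₀ term
  have hsingle : μ x₀ * (t ^ 2 - t + 1/4) ≤ S + Vol / 4 := by
    have := Finset.single_le_sum
      (f := fun x => μ x * (Real.exp (u x) ^ 2 - Real.exp (u x) + 1/4))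
      (fun x _ => by nlinarith [mul_nonneg (hμ x).le (sq_nonneg (Real.exp (u x) - 1/2))])
      (Finset.mem_univ x₀)
    have heq : ∑ x, μ x * (Real.exp (u x) ^ 2 - Real.exp (u x) + 1/4) = S + Vol / 4 := by
      rw [hSdef, hVol]
      simp_rw [show ∀ x : V, μ x * (Real.exp (u x) ^ 2 - Real.exp (u x) + 1/4) =
        μ x * (Real.exp (u x) ^ 2 - Real.exp (u x)) + μ x / 4 from fun x => by ring,
        Finset.sum_add_distrib, ← Finset.sum_div]
    rw [← heq]; exact this
  have hquad : t ^ 2 - t ≤ a₁ / m := by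
    have h1 : μ x₀ * (t ^ 2 - t) ≤ a₁ := by nlinarith [hμ x₀, hSle, hVol0]
    have h2 : m * (t ^ 2 - t) ≤ μ x₀ * (t ^ 2 - t) := by
      have : 0 ≤ t ^ 2 - t := by nlinarith
      exact mul_le_mul_of_nonneg_right (hmle x₀) this
    rw [le_div_iff₀ hm0]
    nlinarith [h1, h2]
  -- solve the quadratic inequality
  set b : ℝ := a₁ / m with hb
  have hb0 : 0 ≤ b := div_nonneg ha10 hm0.le
  have hts : 2 * t - 1 ≤ Real.sqrt (1 + 4 * b) := by
    have h1 : (2 * t - 1) ^ 2 ≤ 1 + 4 * b := by nlinarith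
    calc 2 * t - 1 = Real.sqrt ((2 * t - 1) ^ 2) := (Real.sqrt_sq (by linarith)).symm
      _ ≤ Real.sqrt (1 + 4 * b) := Real.sqrt_le_sqrt h1
  have htT : t ≤ (1 + Real.sqrt (1 + 4 * b)) / 2 := by linarith
  have : u x₀ ≤ Real.log ((1 + Real.sqrt (1 + 4 * b)) / 2) := by
    calc u x₀ = Real.log t := (Real.log_exp _).symm
      _ ≤ _ := Real.log_le_log (Real.exp_pos _) htT
  rw [show 4 * a₁ / m = 4 * b from by rw [hb]; ring]
  exact this.trans (le_max_right _ _)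
end

section
/- Let G=(V,E) be a finite connected weighted graph, λ ≠ 0, and f : V → ℝ with c₁ := −(1/λ)∫_V f dμ ≠ 0. If u solves Δu = λe^u(e^u − 1) + f on V, then max_V u > ln min{1, |c₁|/(4|V|)}. Consequently (combining with the upper bound and the elliptic estimate), there is a constant C > 0 depending only on λ, ‖f‖_∞, ∫_V f dμ, and the graph, such that ‖u‖_∞ ≤ C. -/
open Real Finset Filter Topology

variable {V : Type*}

/-! Summing the equation against `μ` kills the Laplacian, so `∫ e^u (e^u - 1) dμ = c₁`. If
`max u ≤ ln min{1, |c₁|/(4|V|)}` then `|e^u (e^u - 1)| ≤ e^u ≤ |c₁|/(4|V|)` pointwise, which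
contradicts that identity. The same identity, with `e^t (e^t - 1) ≥ -1/4` and `≥ t - 1`, bounds
`u` from above by a constant `M`; then `Δu ≥ -A` for a constant `A`. At a vertex `a` this reads
`ω_ab (M - u b) ≤ (Σ_z ω_az) (M - u a) + μ(a) A` for every neighbour `b`, and chaining these
Harnack-type inequalities along paths of the connected graph turns the lower bound on `u` at its
maximum point into a lower bound everywhere. -/

namespace Real

lemma neg_quarter_le_exp_mul_exp_sub_one (t : ℝ) : -(1 / 4) ≤ exp t * (exp t - 1) := by
  nlinarith [sq_nonneg (exp t - 1 / 2)]

lemma sub_one_le_exp_mul_exp_sub_one (t : ℝ) : t - 1 ≤ exp t * (exp t - 1) := by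
  rcases le_or_gt t 0 with h | h
  · nlinarith [sq_nonneg (exp t - 1 / 2)]
  · nlinarith [add_one_le_exp t, exp_pos t, sq_nonneg (exp t - 1)]

lemma abs_exp_mul_exp_sub_one_le_exp {t : ℝ} (ht : t ≤ 0) : |exp t * (exp t - 1)| ≤ exp t := by
  have h1 : exp t ≤ 1 := exp_le_one_iff.2 ht
  have h0 := exp_pos t
  rw [abs_le]
  constructor <;> nlinarith

lemma abs_exp_mul_exp_sub_one_le {t M : ℝ} (ht : t ≤ M) :
    |exp t * (exp t - 1)| ≤ exp M * (exp M + 1) := by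
  have h := exp_le_exp.2 ht
  rw [abs_mul, abs_of_pos (exp_pos t)]
  exact mul_le_mul h ((abs_sub _ _).trans (by simp [h])) (abs_nonneg _) (exp_pos M).le

end Real

section GraphLaplacian

variable [Fintype V] {μ : V → ℝ} {w : V → V → ℝ}

lemma mul_glap {x : V} (hμ : μ x ≠ 0) (u : V → ℝ) :
    μ x * glap μ w u x = ∑ y, w x y * (u y - u x) := by
  rw [glap, ← mul_assoc, mul_one_div_cancel hμ, one_mul]

lemma intg_glap (hμ : ∀ x, μ x ≠ 0) (hsymm : ∀ x y, w x y = w y x) (u : V → ℝ) :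
    intg μ (glap μ w u) = 0 := by
  have h : ∑ x, ∑ y, w x y * (u y - u x) = -∑ x, ∑ y, w x y * (u y - u x) := by
    conv_lhs => rw [sum_comm]
    rw [← sum_neg_distrib]
    refine sum_congr rfl fun y _ => ?_
    rw [← sum_neg_distrib]
    refine sum_congr rfl fun x _ => ?_
    rw [hsymm x y]
    ring
  simp only [intg, mul_glap (hμ _)]
  linarith

lemma abs_intg_le {g : V → ℝ} {B : ℝ} (hμ : ∀ x, 0 ≤ μ x) (hg : ∀ x, |g x| ≤ B) :
    |intg μ g| ≤ (∑ x, μ x) * B := by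
  rw [sum_mul]
  refine (abs_sum_le_sum_abs _ _).trans (sum_le_sum fun x _ => ?_)
  rw [abs_mul, abs_of_nonneg (hμ x)]
  exact mul_le_mul_of_nonneg_left (hg x) (hμ x)

lemma mul_sub_le_of_neg_le_glap {u : V → ℝ} {M A : ℝ} {a : V} (hμ : 0 < μ a)
    (hw : ∀ z, 0 ≤ w a z) (hM : ∀ z, u z ≤ M) (hA : -A ≤ glap μ w u a) (b : V) :
    w a b * (M - u b) ≤ (∑ z, w a z) * (M - u a) + μ a * A := by
  have hsum : ∑ z, w a z * (M - u z) ≤ (∑ z, w a z) * (M - u a) + μ a * A := by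
    have h := mul_le_mul_of_nonneg_left hA hμ.le
    rw [mul_glap hμ.ne'] at h
    have e : ∑ z, w a z * (M - u z) = (∑ z, w a z) * (M - u a) - ∑ z, w a z * (u z - u a) := by
      rw [sum_mul, ← sum_sub_distrib]
      exact sum_congr rfl fun z _ => by ring
    rw [e]
    linarith
  exact (single_le_sum (fun z _ => mul_nonneg (hw z) (sub_nonneg.2 (hM z))) (mem_univ b)).trans hsum

-- The `+ 1` makes the property monotone in `K` and stable under composition along paths.
variable (μ w) in
def IsHarnackConst (M A : ℝ) (a b : V) (K : ℝ) : Prop :=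
  ∀ u : V → ℝ, (∀ x, u x ≤ M) → (∀ x, -A ≤ glap μ w u x) → M - u b ≤ K * (M - u a + 1)

namespace IsHarnackConst

variable {M A K K' : ℝ} {a b c : V}

lemma refl (a : V) : IsHarnackConst μ w M A a a 1 :=
  fun u _ _ => by linarith

lemma mono (h : IsHarnackConst μ w M A a b K) (hK : K ≤ K') : IsHarnackConst μ w M A a b K' :=
  fun u hM hA => (h u hM hA).trans (mul_le_mul_of_nonneg_right hK (by linarith [hM a]))

lemma trans (h₁ : IsHarnackConst μ w M A a b K) (h₂ : IsHarnackConst μ w M A b c K')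
    (hK' : 0 ≤ K') : IsHarnackConst μ w M A a c (K' * (K + 1)) := fun u hM hA => by
  have hab := mul_le_mul_of_nonneg_left (h₁ u hM hA) hK'
  have hbc := h₂ u hM hA
  nlinarith [hM a]

lemma of_pos_weight (hμ : 0 < μ a) (hw : ∀ z, 0 ≤ w a z) (hA : 0 ≤ A) (hab : 0 < w a b) :
    IsHarnackConst μ w M A a b ((∑ z, w a z + μ a * A) / w a b) := fun u hM hlap => by
  have h := mul_sub_le_of_neg_le_glap hμ hw hM (hlap a) b
  have hW : 0 ≤ ∑ z, w a z := sum_nonneg fun z _ => hw z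
  have hua := hM a
  rw [div_mul_eq_mul_div, le_div_iff₀ hab, mul_comm]
  nlinarith [mul_nonneg hμ.le hA]

end IsHarnackConst

lemma exists_isHarnackConst (hμ : ∀ x, 0 < μ x) (hw : ∀ x y, 0 ≤ w x y) (hconn : GConn w)
    {M A : ℝ} (hA : 0 ≤ A) (a b : V) : ∃ K, 0 ≤ K ∧ IsHarnackConst μ w M A a b K := by
  induction hconn a b with
  | refl => exact ⟨1, zero_le_one, .refl a⟩
  | @tail p q _ hpq ih =>
    obtain ⟨K, hK0, hK⟩ := ih
    have hK'0 : 0 ≤ (∑ z, w p z + μ p * A) / w p q :=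
      div_nonneg (add_nonneg (sum_nonneg fun z _ => hw p z) (mul_nonneg (hμ p).le hA)) hpq.le
    exact ⟨_, by positivity, hK.trans (.of_pos_weight (hμ p) (hw p) hA hpq) hK'0⟩

lemma exists_forall_isHarnackConst (hμ : ∀ x, 0 < μ x) (hw : ∀ x y, 0 ≤ w x y)
    (hconn : GConn w) {M A : ℝ} (hA : 0 ≤ A) :
    ∃ K, 0 ≤ K ∧ ∀ a b, IsHarnackConst μ w M A a b K := by
  have h : ∀ a b, ∀ᶠ K in atTop, IsHarnackConst μ w M A a b K := fun a b => by
    obtain ⟨K, -, hK⟩ := exists_isHarnackConst hμ hw hconn hA a b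
    exact eventually_atTop.2 ⟨K, fun K' hK' => hK.mono hK'⟩
  exact ((eventually_ge_atTop 0).and
    (eventually_all.2 fun a => eventually_all.2 (h a))).exists

lemma exists_supnorm_le_of_neg_le_glap (hμ : ∀ x, 0 < μ x) (hw : ∀ x y, 0 ≤ w x y)
    (hconn : GConn w) {A : ℝ} (hA : 0 ≤ A) (M L : ℝ) :
    ∃ C, 0 < C ∧ ∀ u : V → ℝ, (∀ x, u x ≤ M) → (∀ x, -A ≤ glap μ w u x) →
      ∀ z, L ≤ u z → supnorm u ≤ C := by
  obtain ⟨K, hK0, hK⟩ := exists_forall_isHarnackConst hμ hw hconn (M := M) hA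
  refine ⟨|M| + K * |M - L + 1| + 1, by positivity, fun u hM hlap z hz => ?_⟩
  refine Real.iSup_le (fun y => abs_le.2 ⟨?_, ?_⟩) (by positivity)
  · have hzy := hK z y u hM hlap
    have : K * (M - u z + 1) ≤ K * |M - L + 1| :=
      mul_le_mul_of_nonneg_left ((by linarith : M - u z + 1 ≤ M - L + 1).trans (le_abs_self _)) hK0
    linarith [neg_abs_le M]
  · linarith [hM y, le_abs_self M, mul_nonneg hK0 (abs_nonneg (M - L + 1))]

end GraphLaplacian

section ChernSimonsHiggs

variable [Fintype V] {μ : V → ℝ} {w : V → V → ℝ} {u : V → ℝ}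

variable (μ w) in
def IsChernSimonsHiggsSolution (l : ℝ) (f u : V → ℝ) : Prop :=
  ∀ x, glap μ w u x = l * exp (u x) * (exp (u x) - 1) + f x

lemma IsChernSimonsHiggsSolution.intg_eq {l : ℝ} {f : V → ℝ}
    (hu : IsChernSimonsHiggsSolution μ w l f u)
    (hμ : ∀ x, μ x ≠ 0) (hsymm : ∀ x y, w x y = w y x) (hl : l ≠ 0) :
    intg μ (fun x => exp (u x) * (exp (u x) - 1)) = -(1 / l) * intg μ f := by
  have h : intg μ (glap μ w u) = l * intg μ (fun x => exp (u x) * (exp (u x) - 1)) + intg μ f := by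
    simp only [intg, hu _, mul_sum, ← sum_add_distrib]
    exact sum_congr rfl fun x _ => by ring
  rw [intg_glap hμ hsymm] at h
  field_simp
  linarith

lemma IsChernSimonsHiggsSolution.neg_le_glap {l F M : ℝ} {f : V → ℝ}
    (hu : IsChernSimonsHiggsSolution μ w l f u)
    (hM : ∀ x, u x ≤ M) (hF : ∀ x, |f x| ≤ F) (x : V) :
    -(|l| * (exp M * (exp M + 1)) + F) ≤ glap μ w u x := by
  have hg : |l * exp (u x) * (exp (u x) - 1)| ≤ |l| * (exp M * (exp M + 1)) := by
    rw [mul_assoc, abs_mul]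
    exact mul_le_mul_of_nonneg_left (abs_exp_mul_exp_sub_one_le (hM x)) (abs_nonneg l)
  rw [hu x]
  linarith [neg_abs_le (l * exp (u x) * (exp (u x) - 1)), neg_abs_le (f x), hF x]

lemma log_min_lt_iSup_of_intg_eq (hμ : ∀ x, 0 < μ x) {c : ℝ} (hc : c ≠ 0)
    (h : intg μ (fun x => exp (u x) * (exp (u x) - 1)) = c) :
    log (min 1 (|c| / (4 * ∑ x, μ x))) < ⨆ x, u x := by
  set m := min 1 (|c| / (4 * ∑ x, μ x))
  have hc0 := abs_pos.2 hc
  have hV : (univ : Finset V).Nonempty := by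
    by_contra hV
    rw [not_nonempty_iff_eq_empty] at hV
    rw [← h, intg, hV, sum_empty] at hc
    exact hc rfl
  have hS : 0 < ∑ x, μ x := sum_pos (fun x _ => hμ x) hV
  have hm : 0 < m := lt_min one_pos (by positivity)
  by_contra! hsup
  have hle : |c| ≤ (∑ x, μ x) * m := by
    refine h ▸ abs_intg_le (fun x => (hμ x).le) fun x => ?_
    have hu : u x ≤ log m := (le_ciSup (Finite.bddAbove_range u) x).trans hsup
    refine (abs_exp_mul_exp_sub_one_le_exp (hu.trans (log_nonpos hm.le (min_le_left _ _)))).trans ?_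
    exact (exp_le_exp.2 hu).trans_eq (exp_log hm)
  have : (∑ x, μ x) * m ≤ |c| / 4 := by
    calc (∑ x, μ x) * m ≤ (∑ x, μ x) * (|c| / (4 * ∑ x, μ x)) :=
          mul_le_mul_of_nonneg_left (min_le_right _ _) hS.le
      _ = |c| / 4 := by field_simp
  linarith

lemma le_of_intg_exp_mul_exp_sub_one_eq (hμ : ∀ x, 0 < μ x) {c : ℝ}
    (h : intg μ (fun x => exp (u x) * (exp (u x) - 1)) = c) (x : V) :
    u x ≤ (c + (∑ y, μ y) / 4) / μ x + 1 := by
  have hsingle : μ x * (exp (u x) * (exp (u x) - 1) + 1 / 4)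
      ≤ ∑ y, μ y * (exp (u y) * (exp (u y) - 1) + 1 / 4) :=
    single_le_sum (f := fun y => μ y * (exp (u y) * (exp (u y) - 1) + 1 / 4))
      (fun y _ => mul_nonneg (hμ y).le (by linarith [neg_quarter_le_exp_mul_exp_sub_one (u y)]))
      (mem_univ x)
  have htotal : ∑ y, μ y * (exp (u y) * (exp (u y) - 1) + 1 / 4) = c + (∑ y, μ y) / 4 := by
    simp only [mul_add, sum_add_distrib, ← h, intg, sum_div]
    exact congrArg _ (sum_congr rfl fun y _ => by ring)
  have hx : exp (u x) * (exp (u x) - 1) + 1 / 4 ≤ (c + (∑ y, μ y) / 4) / μ x := by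
    rw [le_div_iff₀ (hμ x)]
    linarith
  linarith [sub_one_le_exp_mul_exp_sub_one (u x)]

end ChernSimonsHiggs

/-- Lower bound on max u and a priori bound in sup norm, when c₁ = −(1/λ)∫f dμ ≠ 0. -/
theorem stmt9 [Fintype V] [Nonempty V] (μ : V → ℝ) (w : V → V → ℝ)
    (hμ : ∀ x, 0 < μ x) (hsymm : ∀ x y, w x y = w y x) (hnn : ∀ x y, 0 ≤ w x y)
    (hconn : GConn w) (l : ℝ) (hl : l ≠ 0) (f : V → ℝ)
    (hc : -(1 / l) * intg μ f ≠ 0) :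
    (∀ u : V → ℝ,
      (∀ x, glap μ w u x = l * Real.exp (u x) * (Real.exp (u x) - 1) + f x) →
      Real.log (min 1 (|-(1 / l) * intg μ f| / (4 * ∑ x, μ x))) < ⨆ x, u x) ∧
    ∃ C : ℝ, 0 < C ∧ ∀ u : V → ℝ,
      (∀ x, glap μ w u x = l * Real.exp (u x) * (Real.exp (u x) - 1) + f x) →
      supnorm u ≤ C := by
  have hintg : ∀ u, IsChernSimonsHiggsSolution μ w l f u →
      intg μ (fun x => exp (u x) * (exp (u x) - 1)) = -(1 / l) * intg μ f :=
    fun u hu => hu.intg_eq (fun x => (hμ x).ne') hsymm hl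
  have hlower : ∀ u, IsChernSimonsHiggsSolution μ w l f u →
      log (min 1 (|-(1 / l) * intg μ f| / (4 * ∑ x, μ x))) < ⨆ x, u x :=
    fun u hu => log_min_lt_iSup_of_intg_eq hμ hc (hintg u hu)
  refine ⟨hlower, ?_⟩
  obtain ⟨M, hM⟩ := Finite.exists_le fun x => (|-(1 / l) * intg μ f| + (∑ y, μ y) / 4) / μ x + 1
  have hupper : ∀ u, IsChernSimonsHiggsSolution μ w l f u → ∀ x, u x ≤ M := fun u hu x =>
    (le_of_intg_exp_mul_exp_sub_one_eq hμ (hintg u hu) x).trans <| le_trans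
      (by gcongr; exacts [(hμ x).le, le_abs_self _]) (hM x)
  obtain ⟨F, hF⟩ := Finite.exists_le fun x => |f x|
  have hF0 : 0 ≤ F := (abs_nonneg _).trans (hF (Classical.arbitrary V))
  obtain ⟨C, hC, hbound⟩ := exists_supnorm_le_of_neg_le_glap hμ hnn hconn
    (A := |l| * (exp M * (exp M + 1)) + F) (by positivity) M
    (log (min 1 (|-(1 / l) * intg μ f| / (4 * ∑ x, μ x))))
  refine ⟨C, hC, fun u hu => ?_⟩
  obtain ⟨z, hz⟩ := exists_lt_of_lt_ciSup (hlower u hu)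
  exact hbound u (hupper u hu)
    (IsChernSimonsHiggsSolution.neg_le_glap hu (hupper u hu) hF) z hz.le
end

section
/- Let G=(V,E) be a finite connected weighted graph. For any f : V → ℝ with ∫_V f dμ = 0, the unique solution φ of Δφ = f with ∫_V φ dμ = 0 satisfies ‖φ‖_∞ ≤ C̃‖f‖_∞, where C̃ > 0 depends only on the graph (one may take C̃ = √((ℓ−1)|V|/(w₀λ₁)) with ℓ the number of vertices, w₀ the minimum edge weight, and λ₁ the first nonzero Laplacian eigenvalue). -/
open Real Finset Filter Topology

variable {V : Type*}

lemma supnorm_eq_norm [Fintype V] [Nonempty V] (u : V → ℝ) : supnorm u = ‖u‖ := by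
  unfold supnorm
  apply le_antisymm
  · exact ciSup_le fun x => by simpa [Real.norm_eq_abs] using norm_le_pi_norm u x
  · have h0 : 0 ≤ ⨆ x, |u x| :=
      le_ciSup_of_le (Set.finite_range _).bddAbove (Classical.arbitrary V) (abs_nonneg _)
    refine (pi_norm_le_iff_of_nonneg h0).2 fun x => ?_
    simpa [Real.norm_eq_abs] using le_ciSup (Set.finite_range fun x => |u x|).bddAbove x

lemma glap_smul [Fintype V] (μ : V → ℝ) (w : V → V → ℝ) (c : ℝ) (u : V → ℝ) :
    glap μ w (c • u) = c • glap μ w u := by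
  funext x
  simp only [glap, Pi.smul_apply, smul_eq_mul]
  rw [show (∑ y, w x y * (c * u y - c * u x)) = c * ∑ y, w x y * (u y - u x) by
    rw [Finset.mul_sum]; exact Finset.sum_congr rfl fun y _ => by ring]
  ring

lemma intg_smul [Fintype V] (μ : V → ℝ) (c : ℝ) (u : V → ℝ) :
    intg μ (c • u) = c * intg μ u := by
  simp only [intg, Pi.smul_apply, smul_eq_mul, Finset.mul_sum]
  exact Finset.sum_congr rfl fun y _ => by ring

lemma glap_continuous [Fintype V] (μ : V → ℝ) (w : V → V → ℝ) :
    Continuous fun u : V → ℝ => glap μ w u := by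
  refine continuous_pi fun x => ?_
  unfold glap
  exact continuous_const.mul (continuous_finset_sum _ fun y _ =>
    (continuous_const.mul ((continuous_apply y).sub (continuous_apply x))))

lemma intg_continuous [Fintype V] (μ : V → ℝ) :
    Continuous fun u : V → ℝ => intg μ u :=
  continuous_finset_sum _ fun x _ => continuous_const.mul (continuous_apply x)

lemma glap_ker [Fintype V] [Nonempty V] (μ : V → ℝ) (w : V → V → ℝ)
    (hμ : ∀ x, 0 < μ x) (hnn : ∀ x y, 0 ≤ w x y) (hconn : GConn w)
    (φ : V → ℝ) (h0 : ∀ x, glap μ w φ x = 0) (hm : intg μ φ = 0) : φ = 0 := by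
  obtain ⟨x₀, hx₀⟩ := Finite.exists_max φ
  -- at any maximizer b, all positive-weight neighbours are also maximizers
  have step : ∀ b c : V, φ b = φ x₀ → 0 < w b c → φ c = φ x₀ := by
    intro b c hb hw
    have hsum : (∑ y, w b y * (φ y - φ b)) = 0 := by
      have := h0 b
      unfold glap at this
      have hμb : (1 : ℝ) / μ b ≠ 0 := one_div_ne_zero (ne_of_gt (hμ b))
      exact (mul_eq_zero.mp this).resolve_left hμb
    have hnp : ∀ y ∈ Finset.univ, w b y * (φ y - φ b) ≤ 0 := fun y _ =>
      mul_nonpos_of_nonneg_of_nonpos (hnn b y) (by rw [hb]; linarith [hx₀ y])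
    have := (Finset.sum_eq_zero_iff_of_nonpos hnp).mp hsum c (Finset.mem_univ c)
    have hc : φ c - φ b = 0 := by
      rcases mul_eq_zero.mp this with h | h
      · exact absurd h (ne_of_gt hw)
      · exact h
    rw [← hb]; linarith
  have hconst : ∀ y, φ y = φ x₀ := by
    intro y
    induction hconn x₀ y with
    | refl => rfl
    | tail h1 h2 ih => exact step _ _ ih h2
  have hμsum : 0 < ∑ x : V, μ x :=
    Finset.sum_pos (fun x _ => hμ x) Finset.univ_nonempty
  have : φ x₀ * ∑ x : V, μ x = 0 := by
    rw [Finset.mul_sum]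
    rw [intg] at hm
    rw [← hm]
    exact Finset.sum_congr rfl fun y _ => by rw [hconst y]; ring
  have hx0 : φ x₀ = 0 := by
    rcases mul_eq_zero.mp this with h | h
    · exact h
    · exact absurd h (ne_of_gt hμsum)
  funext y
  simp [hconst y, hx0]

/-- Elliptic estimate for the mean-zero solution of Δφ = f: ‖φ‖_∞ ≤ C̃‖f‖_∞. -/
theorem stmt12 [Fintype V] [Nonempty V] (μ : V → ℝ) (w : V → V → ℝ)
    (hμ : ∀ x, 0 < μ x) (hsymm : ∀ x y, w x y = w y x) (hnn : ∀ x y, 0 ≤ w x y)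
    (hconn : GConn w) :
    ∃ C : ℝ, 0 < C ∧ ∀ f φ : V → ℝ, intg μ f = 0 →
      (∀ x, glap μ w φ x = f x) → intg μ φ = 0 →
      supnorm φ ≤ C * supnorm f := by
  classical
  by_cases hS : ∃ ψ : V → ℝ, intg μ ψ = 0 ∧ ‖ψ‖ = 1
  · -- minimize ‖glap ψ‖ on the compact set S
    set S : Set (V → ℝ) := {ψ | intg μ ψ = 0} ∩ Metric.sphere 0 1 with hSdef
    have hScompact : IsCompact S := by
      apply (isCompact_sphere (0 : V → ℝ) 1).inter_left
      exact isClosed_eq (intg_continuous μ) continuous_const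
    have hSne : S.Nonempty := by
      obtain ⟨ψ, h1, h2⟩ := hS
      exact ⟨ψ, h1, by simpa [mem_sphere_zero_iff_norm] using h2⟩
    obtain ⟨ψ₀, hψ₀S, hmin⟩ := hScompact.exists_isMinOn hSne
      (((glap_continuous μ w).norm).continuousOn)
    set m := ‖glap μ w ψ₀‖ with hmdef
    have hψ₀norm : ‖ψ₀‖ = 1 := mem_sphere_zero_iff_norm.mp hψ₀S.2
    have hmpos : 0 < m := by
      rcases lt_or_eq_of_le (norm_nonneg (glap μ w ψ₀)) with h | h
      · exact h
      · exfalso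
        have hz : glap μ w ψ₀ = 0 := norm_eq_zero.mp h.symm
        have : ψ₀ = 0 := glap_ker μ w hμ hnn hconn ψ₀ (fun x => by rw [hz]; rfl) hψ₀S.1
        rw [this] at hψ₀norm; simp at hψ₀norm
    refine ⟨1 / m, by positivity, ?_⟩
    intro f φ hf hφ hmφ
    rw [supnorm_eq_norm, supnorm_eq_norm]
    by_cases h0 : φ = 0
    · rw [h0]; simp; positivity
    · have hφn : (0 : ℝ) < ‖φ‖ := norm_pos_iff.mpr h0
      have hψmem : (‖φ‖⁻¹ • φ) ∈ S := by
        constructor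
        · show intg μ (‖φ‖⁻¹ • φ) = 0
          rw [intg_smul, hmφ, mul_zero]
        · rw [mem_sphere_zero_iff_norm, norm_smul, norm_inv, norm_norm,
            inv_mul_cancel₀ (ne_of_gt hφn)]
      have hle : m ≤ ‖glap μ w (‖φ‖⁻¹ • φ)‖ := hmin hψmem
      have hfφ : glap μ w φ = f := funext hφ
      rw [glap_smul, hfφ, norm_smul, norm_inv, norm_norm] at hle
      rw [div_mul_eq_mul_div, le_div_iff₀ hmpos]
      calc ‖φ‖ * m ≤ ‖φ‖ * (‖φ‖⁻¹ * ‖f‖) := by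
            exact mul_le_mul_of_nonneg_left hle (le_of_lt hφn)
        _ = ‖f‖ := by field_simp
        _ = 1 * ‖f‖ := (one_mul _).symm
    -- done
  · -- degenerate case: the only mean-zero function is 0
    refine ⟨1, one_pos, ?_⟩
    intro f φ hf hφ hmφ
    have h0 : φ = 0 := by
      by_contra h
      have hφn : (0 : ℝ) < ‖φ‖ := norm_pos_iff.mpr h
      exact hS ⟨‖φ‖⁻¹ • φ, by rw [intg_smul, hmφ, mul_zero],
        by rw [norm_smul, norm_inv, norm_norm, inv_mul_cancel₀ (ne_of_gt hφn)]⟩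
    rw [h0, supnorm_eq_norm, supnorm_eq_norm]
    simp
end

section
/- Let G=(V,E) be a finite connected weighted graph, p, q ∈ {1/2, 3/2, 5/2, ...} (half-odd-integers), σ ∈ [0,1], and f, g, φ, ψ : V → ℝ with ∫_V g dμ > 0 (i.e. ḡ > 0). Suppose (w, z) solves the system Δw = 2q e^ψ e^z (e^φ e^w − σ)^{2p} (e^ψ e^z − σ)^{2q−1} + f̄ and Δz = 2p e^φ e^w (e^φ e^w − σ)^{2p−1} (e^ψ e^z − σ)^{2q} + ḡ on V, where f̄, ḡ are the mean values of f, g. Then z(x) ≤ −min_V ψ for all x ∈ V. -/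
open Real Finset Filter Topology

variable {V : Type*}

/-- Upper bound z ≤ −min ψ for solutions of the deformed generalized
Chern–Simons Higgs system; here a = 2p and b = 2q are odd positive integers. -/
theorem stmt13 [Fintype V] [Nonempty V] (μ : V → ℝ) (ω : V → V → ℝ)
    (hμ : ∀ x, 0 < μ x) (hsymm : ∀ x y, ω x y = ω y x) (hnn : ∀ x y, 0 ≤ ω x y)
    (hconn : GConn ω) (a b : ℕ) (ha : Odd a) (hb : Odd b)
    (σ : ℝ) (hσ : σ ∈ Set.Icc (0:ℝ) 1)
    (f g φ ψ wf zf : V → ℝ)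
    (hg : (1 / ∑ x, μ x) * intg μ g > 0)
    (hw : ∀ x, glap μ ω wf x =
      b * Real.exp (ψ x) * Real.exp (zf x)
        * (Real.exp (φ x) * Real.exp (wf x) - σ) ^ a
        * (Real.exp (ψ x) * Real.exp (zf x) - σ) ^ (b - 1)
      + (1 / ∑ y, μ y) * intg μ f)
    (hz : ∀ x, glap μ ω zf x =
      a * Real.exp (φ x) * Real.exp (wf x)
        * (Real.exp (φ x) * Real.exp (wf x) - σ) ^ (a - 1)
        * (Real.exp (ψ x) * Real.exp (zf x) - σ) ^ b
      + (1 / ∑ y, μ y) * intg μ g) :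
    ∀ x, zf x ≤ -(⨅ y, ψ y) := by
  obtain ⟨x₀, hx₀⟩ := Finite.exists_max zf
  have hlap : glap μ ω zf x₀ ≤ 0 := by
    unfold glap
    apply mul_nonpos_of_nonneg_of_nonpos
    · have := hμ x₀; positivity
    · apply Finset.sum_nonpos
      intro y _
      exact mul_nonpos_of_nonneg_of_nonpos (hnn x₀ y) (by linarith [hx₀ y])
  rw [hz x₀] at hlap
  have hcoef : (0:ℝ) ≤ a * Real.exp (φ x₀) * Real.exp (wf x₀)
      * (Real.exp (φ x₀) * Real.exp (wf x₀) - σ) ^ (a - 1) := by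
    have he : Even (a - 1) := Nat.Odd.sub_odd ha odd_one
    have := he.pow_nonneg (Real.exp (φ x₀) * Real.exp (wf x₀) - σ)
    positivity
  have hprod : a * Real.exp (φ x₀) * Real.exp (wf x₀)
      * (Real.exp (φ x₀) * Real.exp (wf x₀) - σ) ^ (a - 1)
      * (Real.exp (ψ x₀) * Real.exp (zf x₀) - σ) ^ b < 0 := by linarith
  have hfac : (Real.exp (ψ x₀) * Real.exp (zf x₀) - σ) ^ b < 0 := by
    by_contra h
    push_neg at h
    exact absurd (mul_nonneg hcoef h) (not_le.mpr hprod)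
  have hneg : Real.exp (ψ x₀) * Real.exp (zf x₀) - σ < 0 := by
    by_contra h
    push_neg at h
    exact absurd (pow_nonneg h b) (not_le.mpr hfac)
  have hE : Real.exp (ψ x₀ + zf x₀) < 1 := by
    rw [Real.exp_add]
    calc Real.exp (ψ x₀) * Real.exp (zf x₀) < σ := by linarith
    _ ≤ 1 := hσ.2
  have hz₀ : zf x₀ ≤ -ψ x₀ := by
    have := (Real.exp_lt_one_iff).mp hE
    linarith
  intro x
  have hinf : (⨅ y, ψ y) ≤ ψ x₀ :=
    ciInf_le (Set.Finite.bddBelow (Set.finite_range ψ)) x₀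
  linarith [hx₀ x]
end
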